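/- Let X and Y be smooth vector fields on M. If there exists a diffeomorphism φ of M with φ(Int{X = 0}) = Int{Y = 0}, then the C^∞(M)-modules ⟨X⟩ = C^∞(M)·X and ⟨Y⟩ = C^∞(M)·Y are isomorphic as modules over the algebra automorphism φ^* of C^∞(M). In particular, if Int{φ_*X = 0} = Int{Y = 0}, the module morphism determined by Y ↦ φ_*X is injective (and surjective), hence an isomorphism. -/

import Mathlib

/-- Let `X, Y` be smooth vector fields and `φ` a diffeomorphism with
`φ(Int{X = 0}) = Int{Y = 0}`.  Then the `C^∞`-modules `⟨X⟩` and `⟨Y⟩` are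
isomorphic via the morphism determined by `Y ↦ φ_*X`; the key point is that
this morphism is injective and surjective, i.e. for any continuous `h`,
`h·(φ_*X) = 0` iff `h·Y = 0`, where `(φ_*X)(y) = dφ(φ⁻¹ y)[X(φ⁻¹ y)]`. -/
theorem stmt12 {E : Type*} [NormedAddCommGroup E] [NormedSpace ℝ E] [FiniteDimensional ℝ E]
    (X Y : E → E) (φ : E → E)
    (hX : ContDiff ℝ (⊤ : ℕ∞) X) (hY : ContDiff ℝ (⊤ : ℕ∞) Y)
    (hφ : ContDiff ℝ (⊤ : ℕ∞) φ) (hφbij : Function.Bijective φ)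
    (hφinv : ContDiff ℝ (⊤ : ℕ∞) (Function.invFun φ))
    (hint : φ '' interior {y | X y = 0} = interior {y | Y y = 0}) :
    ∀ h : E → ℝ, Continuous h →
      ((fun y => h y • fderiv ℝ φ (Function.invFun φ y) (X (Function.invFun φ y)))
          = (0 : E → E) ↔
       (fun y => h y • Y y) = (0 : E → E)) := by
  intro h hh
  set ψ := Function.invFun φ with hψdef
  have hli : Function.LeftInverse ψ φ := Function.leftInverse_invFun hφbij.injective
  have hri : Function.RightInverse ψ φ := Function.rightInverse_invFun hφbij.surjective
  have hdφ : Differentiable ℝ φ := hφ.differentiable (by simp)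
  have hdψ : Differentiable ℝ ψ := hφinv.differentiable (by simp)
  let Φ : Homeomorph E E :=
    { toFun := φ, invFun := ψ, left_inv := hli, right_inv := hri,
      continuous_toFun := hφ.continuous, continuous_invFun := hφinv.continuous }
  set Z : E → E := fun y => fderiv ℝ φ (ψ y) (X (ψ y)) with hZdef
  have key : ∀ y, Z y = 0 ↔ X (ψ y) = 0 := by
    intro y
    constructor
    · intro h0
      have hcomp : fderiv ℝ (ψ ∘ φ) (ψ y) = (fderiv ℝ ψ (φ (ψ y))).comp (fderiv ℝ φ (ψ y)) :=
        fderiv_comp _ (hdψ _) (hdφ _)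
      have hid : fderiv ℝ (ψ ∘ φ) (ψ y) = ContinuousLinearMap.id ℝ E := by
        have hfun : ψ ∘ φ = id := funext hli
        rw [hfun, fderiv_id]
      have := congrArg (fun L : E →L[ℝ] E => L (X (ψ y))) (hid.symm.trans hcomp)
      simpa [hZdef] using this.trans (by simp [show fderiv ℝ φ (ψ y) (X (ψ y)) = 0 from h0])
    · intro h0; simp [hZdef, h0]
  have hZset : {y | Z y = 0} = φ '' {x | X x = 0} := by
    ext y
    simp only [Set.mem_setOf_eq, Set.mem_image]
    constructor
    · intro hy; exact ⟨ψ y, (key y).mp hy, hri y⟩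
    · rintro ⟨x, hx, rfl⟩
      rw [key]
      rwa [hli x]
  have hintZ : interior {y | Z y = 0} = interior {y | Y y = 0} := by
    rw [hZset, ← hint]
    exact (Homeomorph.image_interior Φ _).symm
  have lemB : ∀ W : E → E, ((fun y => h y • W y) = (0 : E → E)) ↔
      ∀ y ∉ interior {y | W y = 0}, h y = 0 := by
    intro W
    rw [funext_iff]
    constructor
    · intro H y hy
      have hsub : {y | W y ≠ 0} ⊆ {y | h y = 0} := by
        intro z hz
        rcases (by simpa using H z : h z = 0 ∨ W z = 0) with h1 | h2
        · exact h1
        · exact absurd h2 hz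
      have hclosed : IsClosed {y | h y = 0} := isClosed_eq hh continuous_const
      have hcl : closure {y | W y ≠ 0} ⊆ {y | h y = 0} :=
        hclosed.closure_subset_iff.mpr hsub
      apply hcl
      rw [show {y | W y ≠ 0} = {y | W y = 0}ᶜ from rfl, closure_compl]
      exact hy
    · intro H y
      by_cases hw : W y = 0
      · simp [hw]
      · have hyn : y ∉ interior {y | W y = 0} := fun hm => hw (by have := interior_subset hm; simpa using this)
        simp [H y hyn]
  rw [lemB Z, lemB Y, hintZ]
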